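/- arXiv:2206.13606 — 3 statements merged into one kernel-verified Lean document; each statement's English description precedes it below -/
import Mathlib

section
/- With λ_t defined as λ_t = ρ_{max(t, τ₁)}/(1 + ln(τ₂/τ₁)) where ρ_t = B/t, for every integer T ∈ [τ₁, τ₂]: (1/T)·∑_{t=1}^T min{λ_t/ρ_T, 1} ≥ 1/(1 + ln(τ₂/τ₁)). -/
open Finset

lemma one_le_one_add_log_div {a b : ℝ} (ha : 0 < a) (hab : a ≤ b) :
    1 ≤ 1 + Real.log (b / a) :=
  le_add_of_nonneg_right (Real.log_nonneg ((one_le_div ha).mpr hab))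

lemma one_div_le_min_div_div_one {a b L : ℝ} (hb : 0 < b) (hba : b ≤ a) (hL : 1 ≤ L) :
    1 / L ≤ min (a / L / b) 1 := by
  refine le_min ?_ (div_le_one_of_le₀ hL (zero_le_one.trans hL))
  rw [div_right_comm]
  gcongr
  exact (one_le_div hb).mpr hba

lemma le_one_div_mul_sum_Icc {f : ℕ → ℝ} {c : ℝ} {T : ℕ} (hT : 0 < T)
    (h : ∀ t ∈ Icc 1 T, c ≤ f t) : c ≤ 1 / (T : ℝ) * ∑ t ∈ Icc 1 T, f t := by
  have hsum : (T : ℝ) * c ≤ ∑ t ∈ Icc 1 T, f t := by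
    simpa using card_nsmul_le_sum (Icc 1 T) f c h
  rw [one_div_mul_eq_div, le_div_iff₀ (by exact_mod_cast hT)]
  linarith

theorem stmt9_general (B : ℝ) (hB : 0 < B) (τ₁ τ₂ : ℕ) (h1 : 1 ≤ τ₁)
    (T : ℕ) (hT1 : τ₁ ≤ T) (hT2 : T ≤ τ₂) :
    (1 / (T : ℝ)) * ∑ t ∈ Finset.Icc 1 T,
        min ((B / ((max t τ₁ : ℕ) : ℝ) / (1 + Real.log ((τ₂ : ℝ) / τ₁))) / (B / (T : ℝ))) 1
      ≥ 1 / (1 + Real.log ((τ₂ : ℝ) / τ₁)) := by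
  have hL : 1 ≤ 1 + Real.log ((τ₂ : ℝ) / τ₁) :=
    one_le_one_add_log_div (by exact_mod_cast h1) (by exact_mod_cast hT1.trans hT2)
  have hT : 0 < T := by omega
  refine le_one_div_mul_sum_Icc hT fun t ht => ?_
  have hmax : max t τ₁ ≤ T := max_le (mem_Icc.mp ht).2 hT1
  have hmax_pos : 0 < max t τ₁ := lt_max_of_lt_right h1
  have hρ : B / (T : ℝ) ≤ B / ((max t τ₁ : ℕ) : ℝ) :=
    div_le_div_of_nonneg_left hB.le (by exact_mod_cast hmax_pos) (by exact_mod_cast hmax)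
  exact one_div_le_min_div_div_one (div_pos hB (by exact_mod_cast hT)) hρ hL

/-- With `λ_t = ρ_{max(t,τ₁)}/(1 + ln(τ₂/τ₁))` where `ρ_t = B/t`, for every integer
`T ∈ [τ₁, τ₂]`: `(1/T)·∑_{t=1}^T min{λ_t/ρ_T, 1} ≥ 1/(1 + ln(τ₂/τ₁))`. -/
theorem stmt9 (B : ℝ) (hB : 0 < B) (τ₁ τ₂ : ℕ) (h1 : 1 ≤ τ₁) (h12 : τ₁ ≤ τ₂)
    (T : ℕ) (hT1 : τ₁ ≤ T) (hT2 : T ≤ τ₂) :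
    (1 / (T : ℝ)) * ∑ t ∈ Finset.Icc 1 T,
        min ((B / ((max t τ₁ : ℕ) : ℝ) / (1 + Real.log ((τ₂ : ℝ) / τ₁))) / (B / (T : ℝ))) 1
      ≥ 1 / (1 + Real.log ((τ₂ : ℝ) / τ₁)) :=
  stmt9_general B hB τ₁ τ₂ h1 T hT1 hT2
end

section
/- Let H be the CDF on [0,1] given by H(s) = s^{r/(1-r)} for 0 < r < 1. For a random variable s with CDF H and threshold x ∈ [0,1], the expected accepted cost E[s·1{s ≤ x}] = r·x^{1/(1-r)} and the acceptance probability H(x) = x^{r/(1-r)}; consequently the expected reward r^r·H(x) equals (E[s·1{s ≤ x}])^r. -/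
/-!
By the layer-cake formula, `E[s·1{s ≤ x}] = ∫₀^∞ P(t < s ≤ x) dt = x·H(x) - ∫₀^x H`.
For `H(t) = t^p` this is `p/(p+1) · x^(p+1)`, and `p = r/(1-r)` gives `p/(p+1) = r` and
`p + 1 = 1/(1-r)`. The last identity is then `(r·x^{1/(1-r)})^r = r^r·x^{r/(1-r)}`.
-/

open MeasureTheory Set

lemma measureReal_Ioc_eq_sub_of_le (μ : Measure ℝ) [IsFiniteMeasure μ] {t x : ℝ}
    (h : t ≤ x) :
    μ.real (Ioc t x) = μ.real (Iic x) - μ.real (Iic t) := by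
  have hdiff : Iic x \ Iic t = Ioc t x := by
    ext s
    simp [and_comm]
  rw [← hdiff, measureReal_sdiff (Iic_subset_Iic.2 h) measurableSet_Iic]

lemma setIntegral_Iic_id_eq_mul_sub_integral (μ : Measure ℝ) [IsFiniteMeasure μ]
    (hμ : ∀ᵐ s ∂μ, 0 ≤ s) {x : ℝ} (hx : 0 ≤ x) :
    ∫ s in Iic x, s ∂μ = x * μ.real (Iic x) - ∫ t in (0)..x, μ.real (Iic t) := by
  have hbdd : ∀ᵐ s ∂μ.restrict (Iic x), ‖s‖ ≤ x := by
    filter_upwards [ae_restrict_of_ae hμ, ae_restrict_mem measurableSet_Iic] with s h0 hsx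
    rwa [Real.norm_of_nonneg h0]
  have hint : IntegrableOn (fun s ↦ s) (Iic x) μ :=
    Measure.integrableOn_of_bounded (measure_ne_top μ _) aestronglyMeasurable_id hbdd
  have hmono : Monotone fun t ↦ μ.real (Iic t) :=
    fun _ _ h ↦ measureReal_mono (Iic_subset_Iic.2 h)
  calc ∫ s in Iic x, s ∂μ
      = ∫ t in Ioi 0, μ.real (Ioc t x) := by
        rw [hint.integral_eq_integral_meas_lt (ae_restrict_of_ae hμ)]
        refine setIntegral_congr_fun measurableSet_Ioi fun t _ ↦ ?_
        change (μ.restrict (Iic x)).real (Ioi t) = _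
        rw [measureReal_restrict_apply measurableSet_Ioi, Ioi_inter_Iic]
    _ = ∫ t in Ioc 0 x, μ.real (Ioc t x) := by
        refine setIntegral_eq_of_subset_of_forall_sdiff_eq_zero measurableSet_Ioi
          Ioc_subset_Ioi_self fun t ht ↦ ?_
        have htx : x < t := by simpa [mem_Ioi.1 ht.1] using ht.2
        simp [Ioc_eq_empty_of_le htx.le]
    _ = ∫ t in (0)..x, (μ.real (Iic x) - μ.real (Iic t)) := by
        rw [intervalIntegral.integral_of_le hx]
        refine setIntegral_congr_fun measurableSet_Ioc fun t ht ↦ ?_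
        exact measureReal_Ioc_eq_sub_of_le μ ht.2
    _ = x * μ.real (Iic x) - ∫ t in (0)..x, μ.real (Iic t) := by
        rw [intervalIntegral.integral_sub intervalIntegrable_const hmono.intervalIntegrable,
          intervalIntegral.integral_const, smul_eq_mul, sub_zero]

lemma mul_rpow_sub_integral_rpow {p x : ℝ} (hp : -1 < p) (hx : 0 ≤ x) :
    x * x ^ p - ∫ t in (0)..x, t ^ p = p / (p + 1) * x ^ (p + 1) := by
  have hp1 : p + 1 ≠ 0 := by linarith
  rw [integral_rpow (Or.inl hp), Real.zero_rpow hp1, Real.rpow_add_one' hx hp1]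
  field_simp
  ring

/-- For a random consumption rate `s` with CDF `H(s) = s^{r/(1-r)}` on `[0,1]` and a
threshold `x ∈ [0,1]`: `E[s·1{s≤x}] = r·x^{1/(1-r)}`, `H(x) = x^{r/(1-r)}`, and the
expected reward `r^r·H(x)` equals `(E[s·1{s≤x}])^r`. -/
theorem stmt14 (r : ℝ) (hr0 : 0 < r) (hr1 : r < 1) (x : ℝ) (hx0 : 0 ≤ x) (hx1 : x ≤ 1)
    (μ : Measure ℝ) [IsProbabilityMeasure μ]
    (hcdf : ∀ y : ℝ, 0 ≤ y → y ≤ 1 →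
      (μ (Set.Iic y)).toReal = y ^ (r / (1 - r)))
    (hsupp : μ (Set.Icc (0 : ℝ) 1)ᶜ = 0) :
    (∫ s in Set.Iic x, s ∂μ) = r * x ^ (1 / (1 - r)) ∧
    (μ (Set.Iic x)).toReal = x ^ (r / (1 - r)) ∧
    r ^ r * (μ (Set.Iic x)).toReal = (∫ s in Set.Iic x, s ∂μ) ^ r := by
  have h1r : 0 < 1 - r := by linarith
  have hp : -1 < r / (1 - r) := by
    have : 0 ≤ r / (1 - r) := div_nonneg hr0.le h1r.le
    linarith
  have hp_succ : r / (1 - r) + 1 = 1 / (1 - r) := by field_simp; ring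
  have hp_ratio : r / (1 - r) / (r / (1 - r) + 1) = r := by rw [hp_succ]; field_simp
  have hnonneg : ∀ᵐ s ∂μ, 0 ≤ s := by
    filter_upwards [mem_ae_iff.2 hsupp] with s hs using hs.1
  have hcdf_x : μ.real (Iic x) = x ^ (r / (1 - r)) := hcdf x hx0 hx1
  have hcdf_on : ∫ t in (0)..x, μ.real (Iic t) = ∫ t in (0)..x, t ^ (r / (1 - r)) :=
    intervalIntegral.integral_congr fun t ht ↦ by
      rw [uIcc_of_le hx0] at ht
      exact hcdf t ht.1 (ht.2.trans hx1)
  have hmean : ∫ s in Iic x, s ∂μ = r * x ^ (1 / (1 - r)) := by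
    rw [setIntegral_Iic_id_eq_mul_sub_integral μ hnonneg hx0, hcdf_x, hcdf_on,
      mul_rpow_sub_integral_rpow hp hx0, hp_ratio, hp_succ]
  refine ⟨hmean, hcdf_x, ?_⟩
  rw [hmean, ← measureReal_def, hcdf_x, Real.mul_rpow hr0.le (Real.rpow_nonneg hx0 _),
    ← Real.rpow_mul hx0, one_div_mul_eq_div]
end

section
/- For the deterministic single-resource instance with reward f_r(x) = x^r (r ∈ (0,1)), linear consumption, budget B, and uncertainty window [τ₁, τ₂]: if an algorithm fixes a proxy horizon T* ∈ [τ₁, τ₂] and plays the hindsight-optimal constant action B/T* until the budget is exhausted, then its performance ratio at T = τ₁ is (τ₁/T*)^r and at T = τ₂ is (T*/τ₂)^{1−r}. Consequently min over r ∈ (0,1) of max over these two ratios is at most (τ₂/τ₁)^{−1/2}. -/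
/-!
At `T = τ₁` the budget is not exhausted, so the algorithm collects `(B/T*)^r τ₁` against the
optimum `B^r τ₁^{1-r}`; at `T = τ₂` it spends the whole budget by `T*`, collecting
`B^r T*^{1-r}` against `B^r τ₂^{1-r}`. Writing `a = τ₁/T*` and `b = T*/τ₂`, the two ratios are
`a^r` and `b^{1-r}`: letting `r → 1` makes the minimum at most `a`, letting `r → 0` at most `b`,
and `min a b ≤ √(ab) = (τ₂/τ₁)^{-1/2}`.
-/

open Set Topology

namespace Real

lemma div_rpow_mul_div_rpow_mul_rpow_one_sub {B T x : ℝ} (hB : 0 < B) (hT : 0 < T) (hx : 0 < x)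
    (r : ℝ) : (B / T) ^ r * x / (B ^ r * x ^ (1 - r)) = (x / T) ^ r := by
  have hBr : 0 < B ^ r := rpow_pos_of_pos hB r
  have hTr : 0 < T ^ r := rpow_pos_of_pos hT r
  rw [div_rpow hB.le hT.le, div_rpow hx.le hT.le, rpow_sub hx, rpow_one]
  field_simp

lemma div_rpow_mul_self_div_rpow_mul_rpow_one_sub {B T y : ℝ} (hB : 0 < B) (hT : 0 < T)
    (hy : 0 < y) (r : ℝ) : (B / T) ^ r * T / (B ^ r * y ^ (1 - r)) = (T / y) ^ (1 - r) := by
  have hBr : 0 < B ^ r := rpow_pos_of_pos hB r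
  have hTr : 0 < T ^ r := rpow_pos_of_pos hT r
  have hyr : 0 < y ^ (1 - r) := rpow_pos_of_pos hy _
  rw [div_rpow hB.le hT.le, div_rpow hT.le hy.le, rpow_sub hT, rpow_one]
  field_simp

lemma min_le_sqrt_mul {a b : ℝ} (ha : 0 ≤ a) (hb : 0 ≤ b) : min a b ≤ √(a * b) :=
  (le_sqrt (le_min ha hb) (mul_nonneg ha hb)).2 <| by
    rw [sq]; exact mul_le_mul (min_le_left a b) (min_le_right a b) (le_min ha hb) ha

end Real

lemma ciInf_Ioo_le_of_continuousWithinAt {f : ℝ → ℝ} {a b x : ℝ} (hab : a < b)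
    (hx : x ∈ Icc a b) (hbdd : BddBelow (range fun r : Ioo a b => f r))
    (hf : ContinuousWithinAt f (Ioo a b) x) : ⨅ r : Ioo a b, f r ≤ f x := by
  have : (𝓝[Ioo a b] x).NeBot := mem_closure_iff_nhdsWithin_neBot.1 (by rwa [closure_Ioo hab.ne])
  exact ge_of_tendsto hf (eventually_nhdsWithin_of_forall fun r hr => ciInf_le hbdd ⟨r, hr⟩)

lemma iInf_Ioo_min_rpow_rpow_one_sub_le_min {a b : ℝ} (ha : 0 < a) (hb : 0 < b) :
    ⨅ r : Ioo (0 : ℝ) 1, min (a ^ (r : ℝ)) (b ^ (1 - (r : ℝ))) ≤ min a b := by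
  set f : ℝ → ℝ := fun r => min (a ^ r) (b ^ (1 - r))
  have hf : Continuous f := by
    refine Continuous.min ?_ ?_ <;> refine Continuous.rpow continuous_const (by fun_prop) ?_
    exacts [fun _ => Or.inl ha.ne', fun _ => Or.inl hb.ne']
  have hbdd : BddBelow (range fun r : Ioo (0 : ℝ) 1 => f r) :=
    ⟨0, by rintro _ ⟨r, rfl⟩; positivity⟩
  have h₁ := ciInf_Ioo_le_of_continuousWithinAt zero_lt_one (right_mem_Icc.2 zero_le_one) hbdd
    hf.continuousWithinAt
  have h₀ := ciInf_Ioo_le_of_continuousWithinAt zero_lt_one (left_mem_Icc.2 zero_le_one) hbdd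
    hf.continuousWithinAt
  simp only [f, Real.rpow_one, sub_self, Real.rpow_zero, sub_zero] at h₀ h₁
  exact le_min (h₁.trans (min_le_left _ _)) (h₀.trans (min_le_right _ _))

/-- For the deterministic instance with reward `x^r`, budget `B`, window `[τ₁,τ₂]` and
proxy horizon `T* ∈ [τ₁,τ₂]` played at constant rate `B/T*`: the performance ratio at
`T = τ₁` is `(τ₁/T*)^r`, at `T = τ₂` is `(T*/τ₂)^{1-r}`, and the infimum over
`r ∈ (0,1)` of the minimum of these two ratios is at most `(τ₂/τ₁)^{-1/2}`. -/
theorem stmt16 (B : ℝ) (hB : 0 < B) (τ₁ τ₂ Ts : ℕ)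
    (h1 : 1 ≤ τ₁) (hT1 : τ₁ ≤ Ts) (hT2 : Ts ≤ τ₂) :
    (∀ r : ℝ, 0 < r → r < 1 →
        ((B / (Ts : ℝ)) ^ r * (τ₁ : ℝ)) / (B ^ r * (τ₁ : ℝ) ^ (1 - r))
          = ((τ₁ : ℝ) / (Ts : ℝ)) ^ r) ∧
    (∀ r : ℝ, 0 < r → r < 1 →
        ((B / (Ts : ℝ)) ^ r * (Ts : ℝ)) / (B ^ r * (τ₂ : ℝ) ^ (1 - r))
          = ((Ts : ℝ) / (τ₂ : ℝ)) ^ (1 - r)) ∧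
    ⨅ r : Set.Ioo (0 : ℝ) 1,
        min (((τ₁ : ℝ) / (Ts : ℝ)) ^ (r : ℝ)) (((Ts : ℝ) / (τ₂ : ℝ)) ^ (1 - (r : ℝ)))
      ≤ ((τ₂ : ℝ) / (τ₁ : ℝ)) ^ (-(1 / 2) : ℝ) := by
  have hτ₁ : (0 : ℝ) < τ₁ := by exact_mod_cast h1
  have hTs : (0 : ℝ) < Ts := hτ₁.trans_le (by exact_mod_cast hT1)
  have hτ₂ : (0 : ℝ) < τ₂ := hTs.trans_le (by exact_mod_cast hT2)
  refine ⟨fun r _ _ => Real.div_rpow_mul_div_rpow_mul_rpow_one_sub hB hTs hτ₁ r,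
    fun r _ _ => Real.div_rpow_mul_self_div_rpow_mul_rpow_one_sub hB hTs hτ₂ r, ?_⟩
  have hsqrt : ((τ₂ : ℝ) / τ₁) ^ (-(1 / 2) : ℝ) = √((τ₁ / Ts) * (Ts / τ₂)) := by
    rw [Real.rpow_neg (by positivity), ← Real.inv_rpow (by positivity), inv_div,
      div_mul_div_cancel₀ hTs.ne', Real.sqrt_eq_rpow]
  rw [hsqrt]
  exact (iInf_Ioo_min_rpow_rpow_one_sub_le_min (div_pos hτ₁ hTs) (div_pos hTs hτ₂)).trans
    (Real.min_le_sqrt_mul (by positivity) (by positivity))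
end
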